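/- Let γ, p ∈ ℝ satisfy 0 ≤ γ + 2p < 1, and let W : ℝ → ℝ be locally bounded and measurable with W(Y) = W(−Y) and |W(Y)| ≤ C·e^{(γ/2+p)|Y|} for all Y ∈ ℝ. Define Ψ(k;W) := ∫_{−∞}^0 ∫_{log(1−e^Y)}^{∞} e^{(Y−Z)/2} W(Y−Z)·(e^{ikY}+e^{ikZ}) dZ dY. Then: (i) Ψ(−k;W) is the complex conjugate of Ψ(k;W) for every k ∈ ℝ; (ii) for every k ∈ ℝ with k ≠ 0, Ψ(k;W) = (1/(ik)) ∫₀^{∞} W(z)·G(z,k) dz, where G(z,k) = e^{−z/2}(1+e^{ikz})(1−(e^z+1)^{−ik}) + e^{z/2}(1+e^{−ikz})(1−(e^{−z}+1)^{−ik}). -/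

import Mathlib

open MeasureTheory Real Set

/-- The eigenvalue `Ψ(k;W) = ∫_{−∞}^0 ∫_{log(1−e^Y)}^{∞}
e^{(Y−Z)/2} W(Y−Z) (e^{ikY}+e^{ikZ}) dZ dY` of the linearized operator. -/
noncomputable def coagPsi (W : ℝ → ℝ) (k : ℝ) : ℂ :=
  ∫ Y in Set.Iio (0 : ℝ), ∫ Z in Set.Ioi (Real.log (1 - Real.exp Y)),
    ((Real.exp ((Y - Z) / 2) * W (Y - Z) : ℝ) : ℂ) *
      (Complex.exp (Complex.I * (k : ℂ) * (Y : ℂ)) +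
        Complex.exp (Complex.I * (k : ℂ) * (Z : ℂ)))

/-- `G(z,k) = e^{−z/2}(1+e^{ikz})(1−(e^z+1)^{−ik}) + e^{z/2}(1+e^{−ikz})(1−(e^{−z}+1)^{−ik})`,
where `w^{−ik} = e^{−ik log w}` for `w > 0`. -/
noncomputable def coagG (z k : ℝ) : ℂ :=
  ((Real.exp (-z / 2) : ℝ) : ℂ) * (1 + Complex.exp (Complex.I * (k : ℂ) * (z : ℂ))) *
      (1 - Complex.exp (-(Complex.I * (k : ℂ)) * ((Real.log (Real.exp z + 1) : ℝ) : ℂ))) +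
    ((Real.exp (z / 2) : ℝ) : ℂ) * (1 + Complex.exp (-(Complex.I * (k : ℂ) * (z : ℂ)))) *
      (1 - Complex.exp (-(Complex.I * (k : ℂ)) * ((Real.log (Real.exp (-z) + 1) : ℝ) : ℂ)))

namespace CoagAux

noncomputable def aa (z : ℝ) : ℝ := Real.log (Real.exp (-z) + 1)

lemma aa_pos (z : ℝ) : 0 < aa z :=
  Real.log_pos (by linarith [Real.exp_pos (-z)])

lemma aa_le_exp (z : ℝ) : aa z ≤ Real.exp (-z) := by
  have h := Real.log_le_sub_one_of_pos (x := Real.exp (-z) + 1) (by positivity)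
  simpa [aa] using h

lemma aa_le_linear {z : ℝ} (hz : z ≤ 0) : aa z ≤ Real.log 2 + -z := by
  have h1 : (1:ℝ) ≤ Real.exp (-z) := Real.one_le_exp (by linarith)
  have h2 : Real.exp (-z) + 1 ≤ 2 * Real.exp (-z) := by linarith
  calc aa z ≤ Real.log (2 * Real.exp (-z)) :=
        Real.log_le_log (by positivity) h2
    _ = Real.log 2 + -z := by
        rw [Real.log_mul two_ne_zero (Real.exp_ne_zero _), Real.log_exp]

lemma continuous_aa : Continuous aa := by
  apply Continuous.log
  · fun_prop
  · intro z
    positivity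

lemma region_iff {Y z : ℝ} (hY : Y < 0) :
    z < Y - Real.log (1 - Real.exp Y) ↔ -aa z < Y := by
  have hu0 : 0 < Real.exp Y := Real.exp_pos Y
  have hu1 : Real.exp Y < 1 := Real.exp_lt_one_iff.mpr hY
  have h1mu : (0:ℝ) < 1 - Real.exp Y := by linarith
  have hmul : Real.exp z * Real.exp (-z) = 1 := by
    rw [← Real.exp_add]; simp
  have h1 : z < Y - Real.log (1 - Real.exp Y) ↔
      Real.exp z * (1 - Real.exp Y) < Real.exp Y := by
    rw [lt_sub_iff_add_lt, ← Real.exp_lt_exp (x := z + Real.log (1 - Real.exp Y)),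
      Real.exp_add, Real.exp_log h1mu]
  have h2 : -aa z < Y ↔ (Real.exp Y)⁻¹ < Real.exp (-z) + 1 := by
    rw [neg_lt, ← Real.exp_lt_exp (x := -Y), Real.exp_neg, aa,
      Real.exp_log (by positivity)]
  rw [h1, h2]
  have hinv : (Real.exp Y)⁻¹ * Real.exp Y = 1 := inv_mul_cancel₀ (ne_of_gt hu0)
  constructor <;> intro h
  · nlinarith [Real.exp_pos z, Real.exp_pos (-z), mul_lt_mul_of_pos_right h (Real.exp_pos (-z))]
  · nlinarith [Real.exp_pos z, Real.exp_pos (-z), mul_lt_mul_of_pos_right h (Real.exp_pos Y),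
      mul_pos (Real.exp_pos z) h1mu]

end CoagAux

namespace CoagAux

lemma keybound {c : ℝ} (hc0 : 0 ≤ c) (hc1 : c < 1/2) (z : ℝ) :
    Real.exp (z/2) * Real.exp (c * |z|) * aa z ≤
      (Real.log 2 + ((1/2 - c)/2)⁻¹ + 1) * Real.exp (-((1/2 - c)/2) * |z|) := by
  set ε : ℝ := (1/2 - c)/2 with hεdef
  have hε : 0 < ε := by simp only [hεdef]; linarith
  have hlog2 : 0 ≤ Real.log 2 := Real.log_nonneg one_le_two
  have hKge : 1 ≤ Real.log 2 + ε⁻¹ + 1 := by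
    have : 0 < ε⁻¹ := by positivity
    linarith
  rcases le_or_gt 0 z with hz | hz
  · rw [abs_of_nonneg hz]
    have h1 : Real.exp (z/2) * Real.exp (c * z) * aa z ≤
        Real.exp (z/2) * Real.exp (c * z) * Real.exp (-z) := by
      have := (aa_pos z).le
      gcongr
      exact aa_le_exp z
    have h2 : Real.exp (z/2) * Real.exp (c * z) * Real.exp (-z) = Real.exp ((c - 1/2) * z) := by
      rw [← Real.exp_add, ← Real.exp_add]; congr 1; ring
    have h3 : Real.exp ((c - 1/2) * z) ≤ Real.exp (-ε * z) := by
      apply Real.exp_le_exp.mpr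
      nlinarith
    calc Real.exp (z/2) * Real.exp (c * z) * aa z
        ≤ Real.exp ((c - 1/2) * z) := h2 ▸ h1
      _ ≤ Real.exp (-ε * z) := h3
      _ ≤ (Real.log 2 + ε⁻¹ + 1) * Real.exp (-ε * z) := by nlinarith [Real.exp_pos (-ε * z)]
  · rw [abs_of_neg hz]
    have haux : -z ≤ ε⁻¹ * Real.exp (ε * -z) := by
      have h := Real.add_one_le_exp (ε * -z)
      have h2 : ε * -z ≤ Real.exp (ε * -z) := by linarith
      calc -z = ε⁻¹ * (ε * -z) := by rw [← mul_assoc, inv_mul_cancel₀ hε.ne', one_mul]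
        _ ≤ ε⁻¹ * Real.exp (ε * -z) := by
            apply mul_le_mul_of_nonneg_left h2 (by positivity)
    have hexp1 : (1:ℝ) ≤ Real.exp (ε * -z) := Real.one_le_exp (by nlinarith)
    have h1 : aa z ≤ (Real.log 2 + ε⁻¹) * Real.exp (ε * -z) := by
      calc aa z ≤ Real.log 2 + -z := aa_le_linear hz.le
        _ ≤ Real.log 2 * Real.exp (ε * -z) + ε⁻¹ * Real.exp (ε * -z) := by
            nlinarith
        _ = (Real.log 2 + ε⁻¹) * Real.exp (ε * -z) := by ring
    have h2 : Real.exp (z/2) * Real.exp (c * -z) * aa z ≤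
        Real.exp (z/2) * Real.exp (c * -z) * ((Real.log 2 + ε⁻¹) * Real.exp (ε * -z)) := by
      gcongr
    have h3 : Real.exp (z/2) * Real.exp (c * -z) * ((Real.log 2 + ε⁻¹) * Real.exp (ε * -z)) =
        (Real.log 2 + ε⁻¹) * Real.exp (z/2 + c * -z + ε * -z) := by
      rw [Real.exp_add, Real.exp_add]; ring
    have h4 : z/2 + c * -z + ε * -z = -ε * -z := by
      simp only [hεdef]; ring
    calc Real.exp (z/2) * Real.exp (c * -z) * aa z
        ≤ (Real.log 2 + ε⁻¹) * Real.exp (z/2 + c * -z + ε * -z) := h3 ▸ h2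
      _ = (Real.log 2 + ε⁻¹) * Real.exp (-ε * -z) := by rw [h4]
      _ ≤ (Real.log 2 + ε⁻¹ + 1) * Real.exp (-ε * -z) := by
          nlinarith [Real.exp_pos (-ε * -z)]

lemma integrable_exp_neg_abs {ε : ℝ} (hε : 0 < ε) :
    Integrable (fun z : ℝ => Real.exp (-ε * |z|)) := by
  have hIoi : IntegrableOn (fun z : ℝ => Real.exp (-ε * |z|)) (Ioi 0) := by
    apply ((exp_neg_integrableOn_Ioi 0 hε)).congr_fun ?_ measurableSet_Ioi
    intro x hx
    show Real.exp (-ε * x) = Real.exp (-ε * |x|)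
    rw [abs_of_pos hx]
  have hIio : IntegrableOn (fun z : ℝ => Real.exp (-ε * |z|)) (Iio 0) := by
    have h2 : IntegrableOn ((fun z : ℝ => Real.exp (-ε * |z|)) ∘ (fun x : ℝ => -x))
        ((fun x : ℝ => -x) ⁻¹' (Ioi 0)) := by
      exact (MeasurePreserving.integrableOn_comp_preimage
        (Measure.measurePreserving_neg _)
        (Homeomorph.neg ℝ).measurableEmbedding).2 hIoi
    have hset : ((fun x : ℝ => -x) ⁻¹' (Ioi 0)) = Iio 0 := by
      ext x; simp
    rw [hset] at h2
    apply h2.congr_fun ?_ measurableSet_Iio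
    intro x _
    simp [Function.comp, abs_neg]
  have : IntegrableOn (fun z : ℝ => Real.exp (-ε * |z|)) (Iio 0 ∪ Ici 0) :=
    hIio.union ((integrableOn_Ici_iff_integrableOn_Ioi).mpr hIoi)
  rwa [Iio_union_Ici, integrableOn_univ] at this

open intervalIntegral in
lemma integral_Ioo_exp {k : ℝ} (hk : Complex.I * (k:ℂ) ≠ 0) {a : ℝ} (ha : 0 < a) :
    ∫ Y in Ioo (-a) 0, Complex.exp (Complex.I * (k:ℂ) * (Y:ℂ)) =
      (1 - Complex.exp (-(Complex.I * (k:ℂ)) * (a:ℂ))) / (Complex.I * (k:ℂ)) := by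
  rw [← integral_Ioc_eq_integral_Ioo, ← _root_.intervalIntegral.integral_of_le (by linarith : -a ≤ 0),
    integral_exp_mul_complex hk]
  congr 1
  have h1 : Complex.I * (k:ℂ) * ((0:ℝ):ℂ) = 0 := by simp
  have h2 : Complex.I * (k:ℂ) * ((-a:ℝ):ℂ) = -(Complex.I * (k:ℂ)) * (a:ℂ) := by
    push_cast; ring
  rw [h1, h2, Complex.exp_zero]

end CoagAux

open CoagAux

/-- for `0 ≤ γ+2p < 1` and `W` locally bounded, measurable, even,
with `|W(Y)| ≤ C e^{(γ/2+p)|Y|}`: (i) `Ψ(−k;W) = conj(Ψ(k;W))`;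
(ii) for `k ≠ 0`, `Ψ(k;W) = (1/(ik)) ∫₀^∞ W(z) G(z,k) dz`. -/
theorem stmt_7 (γ p : ℝ) (h0 : 0 ≤ γ + 2 * p) (h1 : γ + 2 * p < 1)
    (W : ℝ → ℝ) (hWmeas : Measurable W)
    (hWloc : ∀ r : ℝ, ∃ M : ℝ, ∀ Y ∈ Set.Icc (-r) r, |W Y| ≤ M)
    (hWsym : ∀ Y : ℝ, W Y = W (-Y))
    (C : ℝ) (hW : ∀ Y : ℝ, |W Y| ≤ C * Real.exp ((γ / 2 + p) * |Y|)) :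
    (∀ k : ℝ, coagPsi W (-k) = (starRingEnd ℂ) (coagPsi W k)) ∧
    (∀ k : ℝ, k ≠ 0 →
      coagPsi W k = (1 / (Complex.I * (k : ℂ))) *
        ∫ z in Set.Ioi (0 : ℝ), ((W z : ℝ) : ℂ) * coagG z k) := by
  constructor
  · -- part (i)
    intro k
    have conjE : ∀ (t : ℝ), (starRingEnd ℂ) (Complex.exp (Complex.I * (k:ℂ) * (t:ℂ)))
        = Complex.exp (Complex.I * ((-k : ℝ):ℂ) * (t:ℂ)) := by
      intro t
      rw [← Complex.exp_conj]
      congr 1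
      rw [map_mul, map_mul, Complex.conj_I, Complex.conj_ofReal, Complex.conj_ofReal]
      push_cast
      ring
    rw [coagPsi, coagPsi, ← integral_conj]
    refine setIntegral_congr_fun measurableSet_Iio fun Y _ => ?_
    rw [← integral_conj]
    refine setIntegral_congr_fun measurableSet_Ioi fun Z _ => ?_
    rw [map_mul, map_add, Complex.conj_ofReal, conjE, conjE]
  · -- part (ii)
    intro k hk
    have hIk : (Complex.I * (k:ℂ)) ≠ 0 :=
      mul_ne_zero Complex.I_ne_zero (Complex.ofReal_ne_zero.mpr hk)
    set c : ℝ := γ / 2 + p with hcdef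
    have hc0 : 0 ≤ c := by rw [hcdef]; linarith
    have hc1 : c < 1/2 := by rw [hcdef]; linarith
    set ε : ℝ := (1/2 - c)/2 with hεdef
    have hε : 0 < ε := by rw [hεdef]; linarith
    set K : ℝ := Real.log 2 + ε⁻¹ + 1 with hKdef
    have hC0 : 0 ≤ C := by
      nlinarith [(abs_nonneg (W 0)).trans (hW 0), Real.exp_pos (c * |(0:ℝ)|)]
    set gfun : ℝ → ℝ → ℂ := fun z Y =>
      ((Real.exp (z/2) * W z : ℝ) : ℂ) *
        (Complex.exp (Complex.I * (k:ℂ) * (Y:ℂ)) +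
          Complex.exp (Complex.I * (k:ℂ) * ((Y - z : ℝ):ℂ))) with hgfun
    set S : Set (ℝ × ℝ) := {q : ℝ × ℝ | -aa q.2 < q.1 ∧ q.1 < 0} with hSdef
    set F : ℝ × ℝ → ℂ := S.indicator (fun q => gfun q.2 q.1) with hFdef
    have hSmeas : MeasurableSet S := by
      have : S = {q : ℝ × ℝ | -aa q.2 < q.1} ∩ {q : ℝ × ℝ | q.1 < 0} := rfl
      rw [this]
      exact (measurableSet_lt ((continuous_aa.comp continuous_snd).neg).measurable
        measurable_fst).inter (measurableSet_lt measurable_fst measurable_const)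
    have hgmeas : Measurable (fun q : ℝ × ℝ => gfun q.2 q.1) := by
      rw [hgfun]
      apply Measurable.mul
      · apply Complex.measurable_ofReal.comp
        exact (Real.measurable_exp.comp (measurable_snd.div_const 2)).mul
          (hWmeas.comp measurable_snd)
      · apply Measurable.add
        · exact Complex.continuous_exp.measurable.comp
            (measurable_const.mul (Complex.measurable_ofReal.comp measurable_fst))
        · exact Complex.continuous_exp.measurable.comp
            (measurable_const.mul (Complex.measurable_ofReal.comp
              (measurable_fst.sub measurable_snd)))
    have hFmeas : AEStronglyMeasurable F (volume.prod volume) :=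
      ((hgmeas.indicator hSmeas).aestronglyMeasurable)
    have hFslice : ∀ z Y : ℝ, F (Y, z) = (Ioo (-aa z) 0).indicator (gfun z) Y := by
      intro z Y
      rw [hFdef, Set.indicator_apply, Set.indicator_apply]
      simp only [hSdef, Set.mem_setOf_eq, Set.mem_Ioo]
    have hgcont : ∀ z, Continuous (gfun z) := by
      intro z
      rw [hgfun]
      apply continuous_const.mul
      apply Continuous.add
      · exact Complex.continuous_exp.comp (continuous_const.mul Complex.continuous_ofReal)
      · exact Complex.continuous_exp.comp (continuous_const.mul
          (Complex.continuous_ofReal.comp (continuous_id.sub continuous_const)))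
    have hsliceInt : ∀ z : ℝ, Integrable (fun Y => F (Y, z)) := by
      intro z
      simp only [hFslice]
      rw [integrable_indicator_iff measurableSet_Ioo]
      exact ((hgcont z).integrableOn_Icc).mono_set Ioo_subset_Icc_self
    have hnormE : ∀ t : ℝ, ‖Complex.exp (Complex.I * (k:ℂ) * (t:ℂ))‖ = 1 := by
      intro t
      rw [show Complex.I * (k:ℂ) * (t:ℂ) = ((k * t : ℝ):ℂ) * Complex.I by push_cast; ring]
      exact Complex.norm_exp_ofReal_mul_I _
    have hgbound : ∀ z Y : ℝ, ‖gfun z Y‖ ≤ 2 * C * (Real.exp (z/2) * Real.exp (c * |z|)) := by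
      intro z Y
      rw [hgfun]
      simp only []
      rw [norm_mul, Complex.norm_real]
      have h1 : ‖Real.exp (z/2) * W z‖ ≤ Real.exp (z/2) * (C * Real.exp (c * |z|)) := by
        rw [Real.norm_eq_abs, abs_mul, abs_of_pos (Real.exp_pos _)]
        exact mul_le_mul_of_nonneg_left (hW z) (Real.exp_pos _).le
      have h2 : ‖Complex.exp (Complex.I * (k:ℂ) * (Y:ℂ)) +
          Complex.exp (Complex.I * (k:ℂ) * ((Y - z : ℝ):ℂ))‖ ≤ 2 := by
        refine (norm_add_le _ _).trans ?_
        rw [hnormE, hnormE]; norm_num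
      calc ‖Real.exp (z/2) * W z‖ * ‖Complex.exp (Complex.I * (k:ℂ) * (Y:ℂ)) +
            Complex.exp (Complex.I * (k:ℂ) * ((Y - z : ℝ):ℂ))‖
          ≤ (Real.exp (z/2) * (C * Real.exp (c * |z|))) * 2 :=
            mul_le_mul h1 h2 (norm_nonneg _) (by positivity)
        _ = 2 * C * (Real.exp (z/2) * Real.exp (c * |z|)) := by ring
    have hIntNorm : ∀ z : ℝ, (∫ Y, ‖F (Y, z)‖) ≤ 2 * C * K * Real.exp (-ε * |z|) := by
      intro z
      have hind : Integrable ((Ioo (-aa z) 0).indicator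
          (fun _ : ℝ => 2 * C * (Real.exp (z/2) * Real.exp (c * |z|)))) := by
        rw [integrable_indicator_iff measurableSet_Ioo]
        exact integrableOn_const measure_Ioo_lt_top.ne
      have h1 : (∫ Y, ‖F (Y, z)‖) ≤ ∫ Y, (Ioo (-aa z) 0).indicator
          (fun _ => 2 * C * (Real.exp (z/2) * Real.exp (c * |z|))) Y := by
        apply integral_mono (hsliceInt z).norm hind
        intro Y
        show ‖F (Y, z)‖ ≤ _
        rw [hFslice, norm_indicator_eq_indicator_norm]
        exact Set.indicator_le_indicator (hgbound z Y)
      have h2 : (∫ Y, (Ioo (-aa z) 0).indicator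
          (fun _ : ℝ => 2 * C * (Real.exp (z/2) * Real.exp (c * |z|))) Y)
          = 2 * C * (Real.exp (z/2) * Real.exp (c * |z|)) * aa z := by
        rw [integral_indicator measurableSet_Ioo, setIntegral_const, smul_eq_mul,
          Real.volume_real_Ioo_of_le (by linarith [aa_pos z] : -aa z ≤ 0)]
        have h3 : (0:ℝ) - -aa z = aa z := by ring
        rw [h3]
        ring
      have h3 := keybound hc0 hc1 z
      rw [← hεdef, ← hKdef] at h3
      calc (∫ Y, ‖F (Y, z)‖)
          ≤ 2 * C * (Real.exp (z/2) * Real.exp (c * |z|)) * aa z := h1.trans_eq h2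
        _ = 2 * C * (Real.exp (z/2) * Real.exp (c * |z|) * aa z) := by ring
        _ ≤ 2 * C * (K * Real.exp (-ε * |z|)) := by
            apply mul_le_mul_of_nonneg_left _ (by positivity : (0:ℝ) ≤ 2 * C)
            calc Real.exp (z/2) * Real.exp (c * |z|) * aa z
                = Real.exp (z/2) * Real.exp (c * |z|) * aa z := rfl
              _ ≤ K * Real.exp (-ε * |z|) := h3
        _ = 2 * C * K * Real.exp (-ε * |z|) := by ring
    have hmaj : Integrable (fun z : ℝ => 2 * C * K * Real.exp (-ε * |z|)) :=
      (integrable_exp_neg_abs hε).const_mul _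
    have hFnormmeas : AEStronglyMeasurable (fun z : ℝ => ∫ Y, ‖F (Y, z)‖) volume := by
      have hsm : StronglyMeasurable (fun q : ℝ × ℝ => ‖F q‖) :=
        ((hgmeas.indicator hSmeas).norm).stronglyMeasurable
      exact hsm.integral_prod_left'.aestronglyMeasurable
    have hFint : Integrable F (volume.prod volume) := by
      rw [MeasureTheory.integrable_prod_iff' hFmeas]
      refine ⟨Filter.Eventually.of_forall hsliceInt, ?_⟩
      apply Integrable.mono' hmaj hFnormmeas
      apply Filter.Eventually.of_forall
      intro z
      rw [Real.norm_eq_abs, abs_of_nonneg (integral_nonneg fun Y => norm_nonneg _)]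
      exact hIntNorm z
    have htrans : ∀ (f : ℝ → ℂ) (L Y : ℝ),
        (∫ Z in Ioi L, f Z) = ∫ z, (Ioi L).indicator f (Y - z) := by
      intro f L Y
      rw [← integral_indicator measurableSet_Ioi]
      exact (integral_sub_left_eq_self ((Ioi L).indicator f) volume Y).symm
    have hstepA : coagPsi W k = ∫ Y, (∫ z, F (Y, z)) := by
      rw [coagPsi, ← integral_indicator measurableSet_Iio]
      congr 1
      funext Y
      rw [Set.indicator_apply]
      by_cases hY : Y ∈ Iio (0:ℝ)
      · rw [if_pos hY]
        have hYlt : Y < 0 := hY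
        rw [htrans _ _ Y]
        congr 1
        funext z
        rw [Set.indicator_apply, hFslice, Set.indicator_apply]
        have hiff : (Y - z ∈ Ioi (Real.log (1 - Real.exp Y))) ↔ (Y ∈ Ioo (-aa z) 0) := by
          rw [Set.mem_Ioi, Set.mem_Ioo]
          constructor
          · intro hlt
            exact ⟨(region_iff hYlt).1 (by linarith), hYlt⟩
          · intro hmem
            have := (region_iff hYlt).2 hmem.1
            linarith
        by_cases hmem : Y - z ∈ Ioi (Real.log (1 - Real.exp Y))
        · rw [if_pos hmem, if_pos (hiff.1 hmem)]
          rw [hgfun]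
          have hz : Y - (Y - z) = z := by ring
          rw [hz]
        · rw [if_neg hmem, if_neg (fun h => hmem (hiff.2 h))]
      · rw [if_neg hY]
        symm
        have hzero : ∀ z : ℝ, F (Y, z) = 0 := by
          intro z
          rw [hFslice, Set.indicator_apply, if_neg]
          intro hmem
          exact hY (Set.mem_Iio.mpr hmem.2)
        simp only [hzero, integral_zero]
    have hswap : coagPsi W k = ∫ z, (∫ Y, F (Y, z)) := by
      rw [hstepA]
      exact MeasureTheory.integral_integral_swap (f := fun Y z => F (Y, z)) hFint
    set hfun : ℝ → ℂ := fun z =>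
      ((Real.exp (z/2) * W z : ℝ):ℂ) *
        ((1 - Complex.exp (-(Complex.I * (k:ℂ)) * ((aa z : ℝ):ℂ))) / (Complex.I * (k:ℂ)) *
          (1 + Complex.exp (-(Complex.I * (k:ℂ)) * (z:ℂ)))) with hhfun
    have hinner : ∀ z : ℝ, (∫ Y, F (Y, z)) = hfun z := by
      intro z
      have h1 : (fun Y => F (Y, z)) = (Ioo (-aa z) 0).indicator (gfun z) :=
        funext fun Y => hFslice z Y
      rw [h1, integral_indicator measurableSet_Ioo]
      have hEsub : ∀ Y : ℝ, Complex.exp (Complex.I * (k:ℂ) * ((Y - z : ℝ):ℂ)) =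
          Complex.exp (Complex.I * (k:ℂ) * (Y:ℂ)) *
            Complex.exp (-(Complex.I * (k:ℂ)) * (z:ℂ)) := by
        intro Y; rw [← Complex.exp_add]; congr 1; push_cast; ring
      have h2 : ∀ Y : ℝ, gfun z Y = ((Real.exp (z/2) * W z : ℝ):ℂ) *
          ((1 + Complex.exp (-(Complex.I * (k:ℂ)) * (z:ℂ))) *
            Complex.exp (Complex.I * (k:ℂ) * (Y:ℂ))) := by
        intro Y; rw [hgfun]; simp only []; rw [hEsub]; ring
      simp only [h2]
      rw [MeasureTheory.integral_const_mul, MeasureTheory.integral_const_mul,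
        integral_Ioo_exp hIk (aa_pos z), hhfun]
      ring
    have hPsi : coagPsi W k = ∫ z, hfun z := by
      rw [hswap]; simp only [hinner]
    have hhInt : Integrable hfun := by
      have h := hFint.integral_prod_right
      exact h.congr (Filter.Eventually.of_forall hinner)
    have hrefl : ∫ z in Iic (0:ℝ), hfun z = ∫ z in Ioi (0:ℝ), hfun (-z) := by
      have h := integral_comp_neg_Iic (0:ℝ) (fun z => hfun (-z))
      simp only [neg_neg, neg_zero] at h
      exact h
    have hcomb : coagPsi W k = ∫ z in Ioi (0:ℝ), (hfun (-z) + hfun z) := by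
      rw [hPsi, ← intervalIntegral.integral_Iic_add_Ioi (b := (0:ℝ)) hhInt.integrableOn hhInt.integrableOn,
        hrefl]
      exact (integral_add (hhInt.comp_neg.integrableOn) hhInt.integrableOn).symm
    have hpoint : ∀ z : ℝ, hfun (-z) + hfun z =
        (1 / (Complex.I * (k:ℂ))) * (((W z : ℝ):ℂ) * coagG z k) := by
      intro z
      have hWz : W (-z) = W z := (hWsym z).symm
      have haan : aa (-z) = Real.log (Real.exp z + 1) := by
        rw [aa, neg_neg]
      simp only [hhfun]
      rw [hWz, haan, aa, coagG]
      push_cast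
      field_simp
    rw [hcomb]
    simp only [hpoint]
    rw [MeasureTheory.integral_const_mul]
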